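/- Let φ : ℝ → ℂ be a continuous even function (φ(-r) = φ(r)) such that there exist x₀ ∈ ℝ \ {0} and c ∈ ℂ \ {0} with lim_{r→∞} φ(r) e^{i r x₀} = c. Then φ is not the Fourier–Stieltjes transform of any finite complex regular Borel measure on ℝ, i.e. there is no finite complex measure μ on ℝ with φ(r) = ∫ e^{-irx} dμ(x) for all r. -/

import Mathlib

/-!
Write `μ = f ν`. The Cesàro means `T⁻¹ ∫₀ᵀ μ̂(r) e^{ira} dr` of its Fourier–Stieltjes transform
converge to the atom `μ({a})`, by Fubini and dominated convergence, since `T⁻¹ ∫₀ᵀ e^{irb} dr`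
tends to `1` or `0` according as `b = 0` or not. Applied to `φ(r) e^{irx₀} → c`, this gives
`μ({x₀}) = c`. By evenness, `φ(r) e^{-irx₀}` is again such a transform and its Cesàro means also
tend to `μ({x₀})`; but `φ(r) e^{-irx₀} = (φ(r) e^{irx₀}) e^{-2irx₀}` is a convergent function
times a nontrivial oscillation, whose Cesàro means tend to `0`. Hence `c = 0`.
-/

open MeasureTheory Filter Complex Topology

theorem Continuous.exists_norm_le_of_tendsto_atTop {E : Type*} [NormedAddCommGroup E]
    {h : ℝ → E} {c : E} (hh : Continuous h) (hlim : Tendsto h atTop (𝓝 c)) :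
    ∃ M, ∀ r, 0 ≤ r → ‖h r‖ ≤ M := by
  obtain ⟨R, hR⟩ := eventually_atTop.mp (hlim.norm.eventually (gt_mem_nhds (lt_add_one ‖c‖)))
  obtain ⟨C, hC⟩ :=
    isCompact_Icc.exists_bound_of_continuousOn (hh.continuousOn (s := Set.Icc 0 R))
  refine ⟨max C (‖c‖ + 1), fun r hr => ?_⟩
  rcases le_total r R with hrR | hRr
  · exact (hC r ⟨hr, hrR⟩).trans (le_max_left _ _)
  · exact (hR r hRr).le.trans (le_max_right _ _)

section Cesaro

variable {E : Type*} [NormedAddCommGroup E] [NormedSpace ℝ E]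

noncomputable def cesaroMean (h : ℝ → E) (T : ℝ) : E :=
  T⁻¹ • ∫ r in (0 : ℝ)..T, h r

theorem cesaroMean_eq_integral_comp_mul (h : ℝ → E) {T : ℝ} (hT : T ≠ 0) :
    cesaroMean h T = ∫ s in (0 : ℝ)..1, h (T * s) := by
  simp [cesaroMean, intervalIntegral.integral_comp_mul_left _ hT]

theorem norm_cesaroMean_le {h : ℝ → E} {C T : ℝ} (hT : 0 ≤ T) (hC : ∀ r, ‖h r‖ ≤ C) :
    ‖cesaroMean h T‖ ≤ C := by
  rcases hT.eq_or_lt with rfl | hT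
  · simpa [cesaroMean] using (norm_nonneg _).trans (hC 0)
  have hint := intervalIntegral.norm_integral_le_of_norm_le_const (a := 0) (b := T)
    fun r _ => hC r
  rw [sub_zero, abs_of_pos hT] at hint
  rw [cesaroMean, norm_smul, norm_inv, Real.norm_of_nonneg hT.le]
  calc T⁻¹ * ‖∫ r in (0 : ℝ)..T, h r‖ ≤ T⁻¹ * (C * T) := by gcongr
    _ = C := by field_simp

theorem cesaroMean_const_smul {𝕜 : Type*} [NontriviallyNormedField 𝕜] [NormedSpace 𝕜 E]
    [SMulCommClass ℝ 𝕜 E] (c : 𝕜) (h : ℝ → E) (T : ℝ) :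
    cesaroMean (fun r => c • h r) T = c • cesaroMean h T := by
  rw [cesaroMean, intervalIntegral.integral_smul, smul_comm, cesaroMean]

theorem cesaroMean_add {f g : ℝ → E} (hf : Continuous f) (hg : Continuous g) (T : ℝ) :
    cesaroMean (fun r => f r + g r) T = cesaroMean f T + cesaroMean g T := by
  rw [cesaroMean, intervalIntegral.integral_add (hf.intervalIntegrable _ _)
    (hg.intervalIntegrable _ _), smul_add, cesaroMean, cesaroMean]

theorem Filter.Tendsto.cesaroMean [CompleteSpace E] {h : ℝ → E} {c : E} (hh : Continuous h)
    (hlim : Tendsto h atTop (𝓝 c)) : Tendsto (cesaroMean h) atTop (𝓝 c) := by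
  obtain ⟨M, hM⟩ := hh.exists_norm_le_of_tendsto_atTop hlim
  have hrescaled : Tendsto (fun T => ∫ s in (0 : ℝ)..1, h (T * s)) atTop
      (𝓝 (∫ _ in (0 : ℝ)..1, c)) := by
    refine intervalIntegral.tendsto_integral_filter_of_dominated_convergence (fun _ => M)
      (.of_forall fun T => (hh.comp (continuous_const_mul T)).aestronglyMeasurable)
      ((eventually_ge_atTop 0).mono fun T hT => .of_forall fun s hs => hM _ ?_)
      intervalIntegrable_const (.of_forall fun s hs => ?_)
    · rw [Set.uIoc_of_le zero_le_one] at hs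
      exact mul_nonneg hT hs.1.le
    · rw [Set.uIoc_of_le zero_le_one] at hs
      exact hlim.comp (tendsto_id.atTop_mul_const hs.1)
  rw [intervalIntegral.integral_const, sub_zero, one_smul] at hrescaled
  exact hrescaled.congr' ((eventually_ne_atTop 0).mono fun T hT =>
    (cesaroMean_eq_integral_comp_mul h hT).symm)

end Cesaro

theorem norm_exp_I_mul_ofReal_mul_ofReal (r a : ℝ) : ‖exp (I * r * a)‖ = 1 := by
  rw [mul_assoc, ← ofReal_mul, norm_exp_I_mul_ofReal]

theorem cesaroMean_exp_of_ne_zero {a : ℝ} (ha : a ≠ 0) (T : ℝ) :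
    cesaroMean (fun r : ℝ => exp (I * r * a)) T = T⁻¹ • ((exp (I * a * T) - 1) / (I * a)) := by
  have hIa : I * a ≠ 0 := mul_ne_zero I_ne_zero (ofReal_ne_zero.mpr ha)
  simp_rw [cesaroMean, mul_right_comm I, integral_exp_mul_complex hIa]
  simp

theorem tendsto_cesaroMean_exp (a : ℝ) :
    Tendsto (cesaroMean fun r : ℝ => exp (I * r * a)) atTop (𝓝 (if a = 0 then 1 else 0)) := by
  by_cases ha : a = 0
  · simpa [ha] using tendsto_const_nhds.cesaroMean continuous_const (c := (1 : ℂ))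
  rw [if_neg ha]
  refine squeeze_zero_norm' (a := fun T : ℝ => T⁻¹ * (2 / |a|)) ?_ ?_
  · filter_upwards [eventually_gt_atTop 0] with T hT
    have hnum : ‖exp (I * a * T) - 1‖ ≤ 2 := by
      calc ‖exp (I * a * T) - 1‖ ≤ ‖exp (I * a * T)‖ + ‖(1 : ℂ)‖ := norm_sub_le _ _
        _ = 2 := by rw [norm_exp_I_mul_ofReal_mul_ofReal, norm_one]; norm_num
    rw [cesaroMean_exp_of_ne_zero ha, norm_smul, norm_inv, Real.norm_of_nonneg hT.le, norm_div,
      norm_mul, norm_I, one_mul, norm_real, Real.norm_eq_abs]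
    gcongr
  · simpa using tendsto_inv_atTop_zero.mul_const (2 / |a|)

theorem continuous_cesaroMean_exp (T : ℝ) :
    Continuous fun a : ℝ => cesaroMean (fun r : ℝ => exp (I * r * a)) T := by
  unfold cesaroMean
  fun_prop

theorem tendsto_cesaroMean_mul_exp {h : ℝ → ℂ} {c : ℂ} (hh : Continuous h)
    (hlim : Tendsto h atTop (𝓝 c)) {a : ℝ} (ha : a ≠ 0) :
    Tendsto (cesaroMean fun r : ℝ => h r * exp (I * r * a)) atTop (𝓝 0) := by
  have hdev : Tendsto (fun r : ℝ => (h r - c) * exp (I * r * a)) atTop (𝓝 0) := by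
    refine squeeze_zero_norm (fun r => ?_)
      (by simpa using (tendsto_sub_nhds_zero_iff.mpr hlim).norm)
    rw [norm_mul, norm_exp_I_mul_ofReal_mul_ofReal, mul_one]
  have hosc : Tendsto (cesaroMean fun r : ℝ => c * exp (I * r * a)) atTop (𝓝 0) := by
    have hlim_osc := (tendsto_cesaroMean_exp a).const_smul c
    rw [if_neg ha, smul_zero] at hlim_osc
    exact hlim_osc.congr fun T => (cesaroMean_const_smul c _ T).symm
  have hsplit : (fun r : ℝ => h r * exp (I * r * a))
      = fun r => (h r - c) * exp (I * r * a) + c * exp (I * r * a) := by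
    ext r; ring
  rw [hsplit, funext (cesaroMean_add (by fun_prop) (by fun_prop)), ← add_zero 0]
  exact (hdev.cesaroMean (by fun_prop)).add hosc

section Fourier

variable {X : Type*} [MeasurableSpace X] {ν : Measure X} {f : X → ℂ} {u : X → ℝ}

theorem cesaroMean_integral_exp_mul [SFinite ν] (hf : Integrable f ν) (hu : Measurable u)
    (T : ℝ) :
    cesaroMean (fun r : ℝ => ∫ x, exp (I * r * u x) * f x ∂ν) T
      = ∫ x, cesaroMean (fun r : ℝ => exp (I * r * u x)) T * f x ∂ν := by
  have hprod : Integrable (Function.uncurry fun (r : ℝ) (x : X) => exp (I * r * u x) * f x)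
      ((volume.restrict (Set.uIoc 0 T)).prod ν) := by
    have : IsFiniteMeasure (volume.restrict (Set.uIoc (0 : ℝ) T)) :=
      isFiniteMeasure_restrict.mpr measure_Ioc_lt_top.ne
    exact (hf.comp_snd ..).bdd_mul (c := 1) (by fun_prop)
      (.of_forall fun p => (norm_exp_I_mul_ofReal_mul_ofReal p.1 (u p.2)).le)
  rw [cesaroMean, intervalIntegral_integral_swap hprod, ← integral_smul]
  congr 1 with x
  rw [intervalIntegral.integral_mul_const, ← smul_mul_assoc, cesaroMean]

theorem tendsto_cesaroMean_integral_exp_mul [SFinite ν] (hf : Integrable f ν)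
    (hu : Measurable u) :
    Tendsto (cesaroMean fun r : ℝ => ∫ x, exp (I * r * u x) * f x ∂ν) atTop
      (𝓝 (∫ x in {x | u x = 0}, f x ∂ν)) := by
  rw [← integral_indicator (measurableSet_eq_fun hu measurable_const),
    funext (cesaroMean_integral_exp_mul hf hu)]
  refine tendsto_integral_filter_of_dominated_convergence (fun x => ‖f x‖)
    (.of_forall fun T => ?_) ((eventually_ge_atTop 0).mono fun T hT => .of_forall fun x => ?_)
    hf.norm (.of_forall fun x => ?_)
  · exact ((continuous_cesaroMean_exp T).measurable.comp hu).aestronglyMeasurable.mul hf.1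
  · rw [norm_mul]
    exact mul_le_of_le_one_left (norm_nonneg _)
      (norm_cesaroMean_le hT fun r => (norm_exp_I_mul_ofReal_mul_ofReal r (u x)).le)
  · by_cases hx : u x = 0 <;>
      simpa [Set.indicator_apply, hx] using (tendsto_cesaroMean_exp (u x)).mul_const (f x)

end Fourier

/-- A continuous even function `φ : ℝ → ℂ` with
`lim_{r→∞} φ(r) e^{irx₀} = c ≠ 0` for some `x₀ ≠ 0` is not the Fourier–Stieltjes
transform of any finite complex regular Borel measure on ℝ (such a measure being
represented as an integrable density `f` against a finite regular positive measure `ν`). -/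
theorem stmt1 (φ : ℝ → ℂ) (hcont : Continuous φ) (hsym : ∀ r, φ (-r) = φ r)
    (x₀ : ℝ) (hx₀ : x₀ ≠ 0) (c : ℂ) (hc : c ≠ 0)
    (hlim : Tendsto (fun r => φ r * Complex.exp (Complex.I * r * x₀)) atTop (nhds c)) :
    ¬ ∃ (ν : Measure ℝ) (f : ℝ → ℂ), IsFiniteMeasure ν ∧ ν.Regular ∧ Integrable f ν ∧
        ∀ r : ℝ, φ r = ∫ x, Complex.exp (-(Complex.I * r * x)) * f x ∂ν := by
  rintro ⟨ν, f, hν, -, hf, hφ⟩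
  have hrep_pos (r : ℝ) :
      φ r * exp (I * r * x₀) = ∫ x, exp (I * r * ↑(x₀ - x)) * f x ∂ν := by
    rw [hφ r, ← integral_mul_const]
    congr 1 with x
    rw [mul_right_comm, ← exp_add]
    congr 2; push_cast; ring
  have hrep_neg (r : ℝ) : φ r * exp (I * r * x₀) * exp (I * r * ↑(-2 * x₀))
      = ∫ x, exp (I * r * ↑(x - x₀)) * f x ∂ν := by
    rw [← hsym r, hφ (-r), ← integral_mul_const, ← integral_mul_const]
    congr 1 with x
    rw [mul_right_comm _ (f x), mul_right_comm _ (f x), ← exp_add, ← exp_add]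
    congr 2; push_cast; ring
  have hatom_pos : ∫ x in {x | x₀ - x = 0}, f x ∂ν = c := by
    refine tendsto_nhds_unique (tendsto_cesaroMean_integral_exp_mul hf (u := fun x => x₀ - x)
      (by fun_prop)) ?_
    simpa only [hrep_pos] using hlim.cesaroMean (by fun_prop)
  have hatom_neg : ∫ x in {x | x - x₀ = 0}, f x ∂ν = 0 := by
    refine tendsto_nhds_unique (tendsto_cesaroMean_integral_exp_mul hf (u := fun x => x - x₀)
      (by fun_prop)) ?_
    simpa only [hrep_neg] using
      tendsto_cesaroMean_mul_exp (by fun_prop) hlim (a := -2 * x₀) (by simpa using hx₀)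
  have hatoms : {x : ℝ | x₀ - x = 0} = {x | x - x₀ = 0} := by
    ext x; simp [sub_eq_zero, eq_comm]
  exact hc (by rw [← hatom_pos, hatoms, hatom_neg])
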